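/- Factor product is associative and commutative, with neutral element the empty factor (∅, the constant-1 function). Moreover: (1) for all sets of variables V, W and every factor φ, Σ_V (Σ_W φ) = Σ_{V∪W} φ; and (2) for all factors φ, ψ and every set of variables V with var(ψ) ∩ V = ∅, Σ_V (φ ⊙ ψ) = (Σ_V φ) ⊙ ψ. -/

import Mathlib

/-!
Factors over a set of typed variables `V`, each variable `v` having a finite web `Web v`.
A factor `φ` is a pair of a finite set `φ.vars` of variables together with a function from
the assignments of the variables in `φ.vars` to the nonnegative reals.  We encode the
function as a function on *total* assignments `(∀ v, Web v) → ℝ≥0` which only depends on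
the values of the variables in `φ.vars` (field `depends`); this is equivalent to a function
on `∏_{v ∈ vars} Web v`.
-/

noncomputable section

/-- A factor: a finite set of variables together with a function from assignments of those
variables to `ℝ≥0`. -/
structure Factor (V : Type) (Web : V → Type) where
  vars : Finset V
  fn : (∀ v, Web v) → NNReal
  depends : ∀ ρ ρ' : (∀ v, Web v), (∀ v ∈ vars, ρ v = ρ' v) → fn ρ = fn ρ'

namespace Factor

variable {V : Type} [DecidableEq V] {Web : V → Type} [∀ v, Fintype (Web v)]

/-- Override an assignment `ρ` on the variables of `s` by the partial assignment `b`. -/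
def envOverride (ρ : ∀ v, Web v) (s : Finset V) (b : ∀ v : ↥s, Web v.1) : ∀ v, Web v :=
  fun v => if h : v ∈ s then b ⟨v, h⟩ else ρ v

/-- Summing-out `Σ_W φ`: the factor on `φ.vars \ W` given by
`(Σ_W φ)(a) = Σ_{b ∈ ⟦W ∩ var φ⟧} φ(a ⊎ b)`. -/
def sumOut (φ : Factor V Web) (W : Finset V) : Factor V Web where
  vars := φ.vars \ W
  fn ρ := ∑ b : (∀ v : ↥(φ.vars ∩ W), Web v.1), φ.fn (envOverride ρ (φ.vars ∩ W) b)
  depends := by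
    intro ρ ρ' h
    refine Finset.sum_congr rfl (fun b _ => ?_)
    refine φ.depends _ _ (fun v hv => ?_)
    by_cases hvs : v ∈ φ.vars ∩ W
    · simp [envOverride, hvs]
    · have hv1 : v ∈ φ.vars \ W := by
        rw [Finset.mem_sdiff]
        refine ⟨hv, fun hw => hvs (Finset.mem_inter.2 ⟨hv, hw⟩)⟩
      simp only [envOverride, hvs, dite_false, dif_neg]
      exact h v hv1

/-- Product of factors: `(φ ⊙ ψ)(c) = φ(c|_{var φ}) · ψ(c|_{var ψ})`. -/
def prod (φ ψ : Factor V Web) : Factor V Web where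
  vars := φ.vars ∪ ψ.vars
  fn ρ := φ.fn ρ * ψ.fn ρ
  depends := fun ρ ρ' h => by
    try simp only
    rw [φ.depends ρ ρ' (fun v hv => h v (Finset.mem_union_left _ hv)),
      ψ.depends ρ ρ' (fun v hv => h v (Finset.mem_union_right _ hv))]

/-- The empty factor `(∅, constant 1)`. -/
def one (V : Type) (Web : V → Type) : Factor V Web :=
  ⟨∅, fun _ => 1, fun _ _ _ => rfl⟩

end Factor

/-!
Products are pointwise products of functions, so the algebraic laws are those of `ℝ≥0`.
Summing out `B` and then `A` sums over the disjoint blocks `var φ ∩ B` and `(var φ \ B) ∩ A`,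
whose joint assignments are exactly the assignments of `var φ ∩ (A ∪ B)`. Summing out `A` from
`φ ⊙ ψ` leaves `ψ` untouched when `var ψ` misses `A`, so `ψ` factors out of the sum.
-/

open Function

theorem Fintype.sum_sum_updateFinset {ι : Type*} [DecidableEq ι] {π : ι → Type*}
    [∀ i, Fintype (π i)] {M : Type*} [AddCommMonoid M] {s t : Finset ι} (hst : Disjoint s t)
    (f : (∀ i, π i) → M) (x : ∀ i, π i) :
    ∑ y : (∀ i : s, π i), ∑ z : (∀ i : t, π i),
        f (updateFinset (updateFinset x s y) t z) =
      ∑ w : (∀ i : ↥(s ∪ t), π i), f (updateFinset x (s ∪ t) w) := by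
  simp_rw [updateFinset_updateFinset hst]
  rw [← Fintype.sum_prod_type']
  exact Fintype.sum_equiv (Equiv.piFinsetUnion π hst) _ _ fun _ => rfl

namespace Factor

attribute [ext] Factor

variable {V : Type} [DecidableEq V] {Web : V → Type}

theorem prod_assoc (φ ψ χ : Factor V Web) :
    (φ.prod ψ).prod χ = φ.prod (ψ.prod χ) :=
  Factor.ext (Finset.union_assoc _ _ _) (funext fun _ => mul_assoc _ _ _)

theorem prod_comm (φ ψ : Factor V Web) : φ.prod ψ = ψ.prod φ :=
  Factor.ext (Finset.union_comm _ _) (funext fun _ => mul_comm _ _)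

theorem prod_one (φ : Factor V Web) : φ.prod (one V Web) = φ :=
  Factor.ext (Finset.union_empty _) (funext fun _ => mul_one _)

theorem one_prod (φ : Factor V Web) : (one V Web).prod φ = φ :=
  Factor.ext (Finset.empty_union _) (funext fun _ => one_mul _)

theorem fn_updateFinset_of_disjoint (φ : Factor V Web) {s : Finset V}
    (hs : Disjoint φ.vars s) (ρ : ∀ v, Web v) (b : ∀ v : ↥s, Web v.1) :
    φ.fn (updateFinset ρ s b) = φ.fn ρ :=
  φ.depends _ _ fun v hv => by
    simp [updateFinset, Finset.disjoint_left.1 hs hv]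

variable [∀ v, Fintype (Web v)]

-- Stated for any `s` equal to `var φ ∩ W`, so that rewriting the index set needs no cast.
theorem sumOut_fn_eq (φ : Factor V Web) {W s : Finset V} (hs : φ.vars ∩ W = s)
    (ρ : ∀ v, Web v) :
    (φ.sumOut W).fn ρ = ∑ b : (∀ v : ↥s, Web v.1), φ.fn (updateFinset ρ s b) := by
  subst hs
  rfl

theorem sumOut_sumOut (φ : Factor V Web) (A B : Finset V) :
    (φ.sumOut B).sumOut A = φ.sumOut (A ∪ B) := by
  have hdisj : Disjoint ((φ.vars \ B) ∩ A) (φ.vars ∩ B) :=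
    Finset.disjoint_left.2 fun v hv hv' =>
      (Finset.mem_sdiff.1 (Finset.mem_inter.1 hv).1).2 (Finset.mem_inter.1 hv').2
  have hunion : (φ.vars \ B) ∩ A ∪ φ.vars ∩ B = φ.vars ∩ (A ∪ B) := by
    ext v; simp only [Finset.mem_union, Finset.mem_inter, Finset.mem_sdiff]; tauto
  refine Factor.ext ?_ (funext fun ρ => ?_)
  · ext v; simp only [sumOut, Finset.mem_sdiff, Finset.mem_union]; tauto
  · rw [sumOut_fn_eq _ rfl, sumOut_fn_eq _ hunion.symm]
    exact Fintype.sum_sum_updateFinset hdisj φ.fn ρ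

theorem sumOut_prod_of_disjoint (φ ψ : Factor V Web) {A : Finset V}
    (hA : Disjoint ψ.vars A) :
    (φ.prod ψ).sumOut A = (φ.sumOut A).prod ψ := by
  have hidx : (φ.vars ∪ ψ.vars) ∩ A = φ.vars ∩ A := by
    rw [Finset.union_inter_distrib_right, Finset.disjoint_iff_inter_eq_empty.1 hA,
      Finset.union_empty]
  have hψ : Disjoint ψ.vars (φ.vars ∩ A) := hA.mono_right Finset.inter_subset_right
  refine Factor.ext ?_ (funext fun ρ => ?_)
  · simp only [sumOut, prod, Finset.union_sdiff_distrib, Finset.sdiff_eq_self_of_disjoint hA]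
  · calc ((φ.prod ψ).sumOut A).fn ρ
        = ∑ b : (∀ v : ↥(φ.vars ∩ A), Web v.1),
            φ.fn (updateFinset ρ _ b) * ψ.fn ρ := by
          rw [sumOut_fn_eq _ hidx]
          exact Finset.sum_congr rfl fun b _ =>
            congrArg (_ * ·) (ψ.fn_updateFinset_of_disjoint hψ ρ b)
      _ = ((φ.sumOut A).prod ψ).fn ρ := by
          rw [← Finset.sum_mul]
          rfl

end Factor

/-- Factor product is associative and commutative, with neutral element the
empty factor `(∅, 1)`.  Moreover (1) `Σ_A (Σ_B φ) = Σ_{A ∪ B} φ` and (2)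
`Σ_A (φ ⊙ ψ) = (Σ_A φ) ⊙ ψ` whenever `var ψ ∩ A = ∅`. -/
theorem factor_prod_assoc_comm_one_sumOut
    {V : Type} [DecidableEq V] {Web : V → Type} [∀ v, Fintype (Web v)] :
    (∀ φ ψ χ : Factor V Web, (φ.prod ψ).prod χ = φ.prod (ψ.prod χ)) ∧
    (∀ φ ψ : Factor V Web, φ.prod ψ = ψ.prod φ) ∧
    (∀ φ : Factor V Web, φ.prod (Factor.one V Web) = φ ∧ (Factor.one V Web).prod φ = φ) ∧
    (∀ (A B : Finset V) (φ : Factor V Web), (φ.sumOut B).sumOut A = φ.sumOut (A ∪ B)) ∧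
    (∀ (φ ψ : Factor V Web) (A : Finset V), ψ.vars ∩ A = ∅ →
      (φ.prod ψ).sumOut A = (φ.sumOut A).prod ψ) := by
  exact ⟨Factor.prod_assoc, Factor.prod_comm, fun φ => ⟨φ.prod_one, φ.one_prod⟩,
    fun A B φ => φ.sumOut_sumOut A B,
    fun φ ψ _ hA => φ.sumOut_prod_of_disjoint ψ (Finset.disjoint_iff_inter_eq_empty.2 hA)⟩
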